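/- Fix (x, v) ∈ ℝᵈ × ℝᵈ, let b ∈ ℝᵈ, set b̃ = (b, 0) ∈ ℝ²ᵈ and F(x, v) = A_x(x − b) + A_v v + N(x, v). Define f̃_{h/2}(x, v) = (x, φ(h/2, v)) ∈ ℝ²ᵈ and μ̃_h(y) = exp(Ã h)(y − b̃) + b̃ for y ∈ ℝ²ᵈ. Write μ̃_h(f̃_{h/2}(x, v)) = (μ_h^S, μ_h^R) with μ_h^S, μ_h^R ∈ ℝᵈ. Then as h → 0⁺: μ_h^S = x + h·v + (h²/2)·F(x, v) + O(h³), and μ_h^R = v + h·(F(x, v) − (1/2)·N(x, v)) + O(h²). -/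

import Mathlib

/-!
Expanding `exp (h • Ã) = 1 + h • Ã + (h ^ 2 / 2) • Ã ^ 2 + O(h ^ 3)` and using
`Ã (p, q) = (q, A_x p + A_v q)` reduces both expansions to two facts about the half step
`w = φ (h / 2) v` of the flow: `w - v = O(h)` and `w - v - (h / 2) • N x v = O(h ^ 2)`.
The second follows from the mean value inequality, because the velocity `N x (φ t v)` of the flow
differs from `N x v` by `O(t)`, `N x` being differentiable at `v`.
-/

open Matrix

/-- The block drift matrix `Ã = [[0, I],[A_x, A_v]]`. -/
noncomputable def Atilde {d : ℕ} (Ax Av : Matrix (Fin d) (Fin d) ℝ) :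
    Matrix (Fin d ⊕ Fin d) (Fin d ⊕ Fin d) ℝ :=
  Matrix.fromBlocks 0 1 Ax Av

/-- `μ̃_h(y) = exp(Ã h)(y − b̃) + b̃`. -/
noncomputable def muTilde {d : ℕ} (Ax Av : Matrix (Fin d) (Fin d) ℝ)
    (b : Fin d → ℝ) (h : ℝ) (y : Fin d ⊕ Fin d → ℝ) : Fin d ⊕ Fin d → ℝ :=
  NormedSpace.exp (h • Atilde Ax Av) *ᵥ (y - Sum.elim b 0) + Sum.elim b 0

open Filter Topology Asymptotics Set

noncomputable def expQuadraticRemainder {𝔸 : Type*} [Ring 𝔸] [Algebra ℝ 𝔸]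
    [TopologicalSpace 𝔸] [IsTopologicalRing 𝔸] (a : 𝔸) (t : ℝ) : 𝔸 :=
  NormedSpace.exp (t • a) - (1 + t • a + (t ^ 2 / 2) • a ^ 2)

theorem expQuadraticRemainder_isBigO {𝔸 : Type*} [NormedRing 𝔸] [NormedAlgebra ℝ 𝔸]
    [CompleteSpace 𝔸] (a : 𝔸) : expQuadraticRemainder a =O[𝓝 0] fun t => t ^ 3 := by
  have htaylor := (NormedSpace.hasFPowerSeriesAt_exp_zero_of_radius_pos (𝕂 := ℝ) (𝔸 := 𝔸)
    (by simp [NormedSpace.expSeries_radius_eq_top])).isBigO_sub_partialSum_pow 3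
  have hsmul : Tendsto (fun t : ℝ => t • a) (𝓝 0) (𝓝 0) := by
    simpa using (tendsto_id (x := 𝓝 (0 : ℝ))).smul_const a
  have hpartial (t : ℝ) : (NormedSpace.expSeries ℝ 𝔸).partialSum 3 (t • a)
      = 1 + t • a + (t ^ 2 / 2) • a ^ 2 := by
    simp only [FormalMultilinearSeries.partialSum, NormedSpace.expSeries_apply_eq, smul_pow,
      Finset.sum_range_succ, Finset.range_one, Finset.sum_singleton, Nat.factorial_zero,
      Nat.cast_one, inv_one, pow_zero, one_smul, Nat.factorial_one, pow_one, Nat.factorial_two,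
      Nat.cast_ofNat, add_right_inj]
    module
  calc expQuadraticRemainder a
      = fun t => NormedSpace.exp (0 + t • a)
          - (NormedSpace.expSeries ℝ 𝔸).partialSum 3 (t • a) := by
        ext t; rw [expQuadraticRemainder, zero_add, hpartial]
    _ =O[𝓝 0] fun t => ‖t • a‖ ^ 3 := htaylor.comp_tendsto hsmul
    _ = fun t => ‖a‖ ^ 3 * ‖t ^ 3‖ := by
        ext t; rw [norm_smul, norm_pow]; ring
    _ =O[𝓝 0] fun t => t ^ 3 := (isBigO_refl _ _).norm_left.const_mul_left _

section MatrixAsymptotics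

variable {α m n F : Type*} [Fintype m] [Fintype n] [Norm F] {l : Filter α}

theorem Asymptotics.IsBigO.mulVec_left (M : Matrix m n ℝ) {f : α → n → ℝ} {g : α → F}
    (hf : f =O[l] g) : (fun a => M *ᵥ f a) =O[l] g := by
  let := Matrix.linftyOpNormedAddCommGroup (m := m) (n := n) (α := ℝ)
  exact (IsBigO.of_bound ‖M‖ (.of_forall fun a => linfty_opNorm_mulVec M (f a))).trans hf

theorem Matrix.expQuadraticRemainder_mulVec_isBigO [DecidableEq n] (A : Matrix n n ℝ)
    {l : Filter ℝ} (hl : l ≤ 𝓝 0) {u : ℝ → n → ℝ} (hu : u =O[l] fun _ => (1 : ℝ)) :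
    (fun t => expQuadraticRemainder A t *ᵥ u t) =O[l] fun t => t ^ 3 := by
  let : NormedRing (Matrix n n ℝ) := Matrix.linftyOpNormedRing
  let : NormedAlgebra ℝ (Matrix n n ℝ) := Matrix.linftyOpNormedAlgebra
  calc (fun t => expQuadraticRemainder A t *ᵥ u t)
      =O[l] fun t => ‖expQuadraticRemainder A t‖ * ‖u t‖ :=
        IsBigO.of_bound 1 (.of_forall fun t => by
          rw [one_mul, norm_mul, norm_norm, norm_norm]
          exact linfty_opNorm_mulVec _ _)
    _ =O[l] fun t => t ^ 3 * 1 :=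
        ((expQuadraticRemainder_isBigO A).mono hl).norm_left.mul hu.norm_left
    _ = fun t => t ^ 3 := by simp only [mul_one]

end MatrixAsymptotics

section SecondOrderTaylor

variable {E : Type*} [NormedAddCommGroup E] [NormedSpace ℝ E] {g g' : ℝ → E} {T : ℝ}

theorem HasDerivWithinAt.isBigO_sub_nhdsGE (hT : 0 < T) {g₀' : E}
    (hg : HasDerivWithinAt g g₀' (Ico 0 T) 0) :
    (fun t => g t - g 0) =O[𝓝[≥] 0] fun t => t := by
  simpa [nhdsWithin_Ico_eq_nhdsGE hT] using hg.hasFDerivWithinAt.isBigO_sub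

theorem isBigO_sub_sub_smul_of_deriv_sub_isBigO (hT : 0 < T)
    (hg : ∀ t ∈ Ico 0 T, HasDerivWithinAt g (g' t) (Ico 0 T) t)
    (hg' : (fun t => g' t - g' 0) =O[𝓝[≥] 0] fun t => t) :
    (fun t => g t - g 0 - t • g' 0) =O[𝓝[≥] 0] fun t => t ^ 2 := by
  obtain ⟨c, hc0, hc⟩ := hg'.exists_pos
  obtain ⟨δ, hδ, hδc⟩ := mem_nhdsGE_iff_exists_Ico_subset.1 hc.bound
  refine IsBigO.of_bound c ?_
  filter_upwards [Ico_mem_nhdsGE (lt_min hδ hT)] with t ⟨ht0, htδT⟩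
  have hsub : Icc 0 t ⊆ Ico 0 T := Icc_subset_Ico_right (htδT.trans_le (min_le_right _ _))
  have hderiv : ∀ s ∈ Icc 0 t,
      HasDerivWithinAt (fun s => g s - s • g' 0) (g' s - g' 0) (Icc 0 t) s := fun s hs => by
    simpa using ((hg s (hsub hs)).mono hsub).fun_sub ((hasDerivWithinAt_id s _).smul_const (g' 0))
  have hbound : ∀ s ∈ Ico 0 t, ‖g' s - g' 0‖ ≤ c * t := fun s ⟨hs0, hst⟩ => by
    have hs : s ∈ Ico 0 δ := ⟨hs0, hst.trans (htδT.trans_le (min_le_left _ _))⟩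
    calc ‖g' s - g' 0‖ ≤ c * ‖s‖ := hδc hs
      _ ≤ c * t := by rw [Real.norm_of_nonneg hs0]; exact mul_le_mul_of_nonneg_left hst.le hc0.le
  have := norm_image_sub_le_of_norm_deriv_le_segment' hderiv hbound t ⟨ht0, le_rfl⟩
  simpa [sub_right_comm, sq, mul_assoc, abs_of_nonneg ht0] using this

theorem isBigO_sub_sub_smul_of_hasDerivWithinAt_comp (hT : 0 < T) {f : E → E}
    (hf : DifferentiableAt ℝ f (g 0))
    (hg : ∀ t ∈ Ico 0 T, HasDerivWithinAt g (f (g t)) (Ico 0 T) t) :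
    (fun t => g t - g 0 - t • f (g 0)) =O[𝓝[≥] 0] fun t => t ^ 2 := by
  have hg₁ := (hg 0 ⟨le_rfl, hT⟩).isBigO_sub_nhdsGE hT
  have hcont : Tendsto g (𝓝[≥] 0) (𝓝 (g 0)) :=
    tendsto_sub_nhds_zero_iff.1 (hg₁.trans_tendsto (tendsto_id.mono_left nhdsWithin_le_nhds))
  exact isBigO_sub_sub_smul_of_deriv_sub_isBigO hT hg
    ((hf.isBigO_sub.comp_tendsto hcont).trans hg₁)

end SecondOrderTaylor

theorem Asymptotics.IsBigO.tendsto_of_sub {E : Type*} [NormedAddCommGroup E] {l : Filter ℝ}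
    (hl : l ≤ 𝓝 0) {w : ℝ → E} {v : E} (hw : (fun h => w h - v) =O[l] fun h => h) :
    Tendsto w l (𝓝 v) :=
  tendsto_sub_nhds_zero_iff.1 (hw.trans_tendsto (tendsto_id.mono_left hl))

theorem Asymptotics.IsBigO.exists_pos_forall_Ioo {E F : Type*} [Norm E]
    [SeminormedAddCommGroup F] {f : ℝ → E} {g : ℝ → F} (hfg : f =O[𝓝[>] 0] g) :
    ∃ C > 0, ∃ h₀ > 0, ∀ h ∈ Ioo 0 h₀, ‖f h‖ ≤ C * ‖g h‖ := by
  obtain ⟨C, hC, hCw⟩ := hfg.exists_pos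
  obtain ⟨h₀, hh₀, hsub⟩ := mem_nhdsGT_iff_exists_Ioo_subset.1 hCw.bound
  exact ⟨C, hC, h₀, hh₀, fun h hh => hsub hh⟩

section Splitting

variable {d : ℕ} (Ax Av : Matrix (Fin d) (Fin d) ℝ) (b x v n : Fin d → ℝ)
  {l : Filter ℝ} {w : ℝ → Fin d → ℝ}

theorem Atilde_mulVec_sum_elim (p q : Fin d → ℝ) :
    Atilde Ax Av *ᵥ Sum.elim p q = Sum.elim q (Ax *ᵥ p + Av *ᵥ q) := by
  rw [Atilde, fromBlocks_mulVec]
  simp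

theorem muTilde_sum_elim (h : ℝ) (y : Fin d → ℝ) :
    muTilde Ax Av b h (Sum.elim x y) =
      Sum.elim (x + h • y + (h ^ 2 / 2) • (Ax *ᵥ (x - b) + Av *ᵥ y))
        (y + h • (Ax *ᵥ (x - b) + Av *ᵥ y)
          + (h ^ 2 / 2) • (Ax *ᵥ y + Av *ᵥ (Ax *ᵥ (x - b) + Av *ᵥ y)))
      + expQuadraticRemainder (Atilde Ax Av) h *ᵥ Sum.elim (x - b) y := by
  have hshift : Sum.elim x y - Sum.elim b 0 = Sum.elim (x - b) y := by
    ext (i | i) <;> simp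
  rw [muTilde, expQuadraticRemainder, hshift, sub_mulVec, add_mulVec, add_mulVec, one_mulVec,
    smul_mulVec, smul_mulVec, pow_two (Atilde Ax Av), ← mulVec_mulVec, Atilde_mulVec_sum_elim,
    Atilde_mulVec_sum_elim]
  ext (i | i) <;>
    simp only [Pi.add_apply, Pi.sub_apply, Pi.smul_apply, Pi.zero_apply, Sum.elim_inl,
      Sum.elim_inr, add_zero, smul_add, smul_eq_mul] <;>
    ring

theorem muTilde_remainder_isBigO (hl : l ≤ 𝓝 0) (hw : (fun h => w h - v) =O[l] fun h => h) :
    (fun h => expQuadraticRemainder (Atilde Ax Av) h *ᵥ Sum.elim (x - b) (w h))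
      =O[l] fun h => h ^ 3 := by
  refine Matrix.expQuadraticRemainder_mulVec_isBigO _ hl
    (Tendsto.isBigO_one ℝ (c := Sum.elim (x - b) v) ?_)
  exact tendsto_pi_nhds.2 fun
    | .inl _ => tendsto_const_nhds
    | .inr i => tendsto_pi_nhds.1 (hw.tendsto_of_sub hl) i

theorem muTilde_inl_isBigO (hl : l ≤ 𝓝 0) (hw : (fun h => w h - v) =O[l] fun h => h)
    (hw₂ : (fun h => w h - v - (h / 2) • n) =O[l] fun h => h ^ 2) :
    (fun h => (fun i => muTilde Ax Av b h (Sum.elim x (w h)) (Sum.inl i))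
        - (x + h • v + (h ^ 2 / 2) • (Ax *ᵥ (x - b) + Av *ᵥ v + n)))
      =O[l] fun h => h ^ 3 := by
  set r := fun h => expQuadraticRemainder (Atilde Ax Av) h *ᵥ Sum.elim (x - b) (w h)
  have hsplit (h : ℝ) :
      h • (w h - v - (h / 2) • n) + (h ^ 2 / 2) • Av *ᵥ (w h - v) + r h ∘ Sum.inl
        = (fun i => muTilde Ax Av b h (Sum.elim x (w h)) (Sum.inl i))
          - (x + h • v + (h ^ 2 / 2) • (Ax *ᵥ (x - b) + Av *ᵥ v + n)) := by
    rw [muTilde_sum_elim]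
    ext i
    simp only [r, mulVec_sub, Pi.add_apply, Pi.smul_apply, Pi.sub_apply, smul_eq_mul,
      Function.comp_apply, smul_add, Sum.elim_inl]
    ring
  have hhalf : (fun h : ℝ => h ^ 2 / 2) =O[l] fun h => h ^ 2 :=
    (isBigO_const_mul_self 2⁻¹ _ l).congr_left fun h => by ring
  refine (IsBigO.add (IsBigO.add ?_ ?_) ?_).congr_left hsplit
  · exact ((isBigO_refl (fun h : ℝ => h) l).smul hw₂).congr_right fun h => by
      simp only [smul_eq_mul]; ring
  · exact (hhalf.smul (hw.mulVec_left Av)).congr_right fun h => by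
      simp only [smul_eq_mul]; ring
  · exact (isBigO_of_le l fun h => pi_norm_comp_le (r h) Sum.inl).trans
      (muTilde_remainder_isBigO Ax Av b x v hl hw)

theorem muTilde_inr_isBigO (hl : l ≤ 𝓝 0) (hw : (fun h => w h - v) =O[l] fun h => h)
    (hw₂ : (fun h => w h - v - (h / 2) • n) =O[l] fun h => h ^ 2) :
    (fun h => (fun i => muTilde Ax Av b h (Sum.elim x (w h)) (Sum.inr i))
        - (v + h • ((Ax *ᵥ (x - b) + Av *ᵥ v + n) - (1 / 2 : ℝ) • n)))
      =O[l] fun h => h ^ 2 := by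
  set r := fun h => expQuadraticRemainder (Atilde Ax Av) h *ᵥ Sum.elim (x - b) (w h)
  set a := fun y => Ax *ᵥ y + Av *ᵥ (Ax *ᵥ (x - b) + Av *ᵥ y)
  have hsplit (h : ℝ) :
      (w h - v - (h / 2) • n) + h • Av *ᵥ (w h - v) + (h ^ 2 / 2) • a (w h)
          + r h ∘ Sum.inr
        = (fun i => muTilde Ax Av b h (Sum.elim x (w h)) (Sum.inr i))
          - (v + h • ((Ax *ᵥ (x - b) + Av *ᵥ v + n) - (1 / 2 : ℝ) • n)) := by
    rw [muTilde_sum_elim]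
    ext i
    simp only [r, a, mulVec_sub, smul_add, Pi.add_apply, Pi.sub_apply, Pi.smul_apply,
      smul_eq_mul, Function.comp_apply, Sum.elim_inr, one_div]
    ring
  have hhalf : (fun h : ℝ => h ^ 2 / 2) =O[l] fun h => h ^ 2 :=
    (isBigO_const_mul_self 2⁻¹ _ l).congr_left fun h => by ring
  have ha : (fun h => a (w h)) =O[l] fun _ => (1 : ℝ) :=
    (((by fun_prop : Continuous a).tendsto v).comp (hw.tendsto_of_sub hl)).isBigO_one ℝ
  refine (IsBigO.add (IsBigO.add (IsBigO.add hw₂ ?_) ?_) ?_).congr_left hsplit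
  · exact ((isBigO_refl (fun h : ℝ => h) l).smul (hw.mulVec_left Av)).congr_right fun h => by
      simp only [smul_eq_mul]; ring
  · exact (hhalf.smul ha).congr_right fun h => by simp only [smul_eq_mul, mul_one]
  · exact ((isBigO_of_le l fun h => pi_norm_comp_le (r h) Sum.inr).trans
      (muTilde_remainder_isBigO Ax Av b x v hl hw)).trans
      ((isLittleO_pow_pow (by norm_num)).isBigO.mono hl)

end Splitting

theorem stmt12_general {d : ℕ} (Ax Av : Matrix (Fin d) (Fin d) ℝ)
    (N : (Fin d → ℝ) → (Fin d → ℝ) → (Fin d → ℝ))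
    (hN : ContDiff ℝ 2 (fun p : (Fin d → ℝ) × (Fin d → ℝ) => N p.1 p.2))
    (x v b : Fin d → ℝ) (T : ℝ) (hT : 0 < T)
    (φ : ℝ → (Fin d → ℝ) → (Fin d → ℝ))
    (hφ0 : ∀ w, φ 0 w = w)
    (hφ : ∀ w, ∀ t ∈ Set.Ico (0:ℝ) T,
      HasDerivWithinAt (fun s => φ s w) (N x (φ t w)) (Set.Ico 0 T) t) :
    ∃ C > (0:ℝ), ∃ h₀ > (0:ℝ), h₀ ≤ 2 * T ∧ ∀ h : ℝ, 0 < h → h < h₀ →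
      ‖(fun i => muTilde Ax Av b h (Sum.elim x (φ (h / 2) v)) (Sum.inl i)) -
          (x + h • v +
            (h ^ 2 / 2) • (Ax *ᵥ (x - b) + Av *ᵥ v + N x v))‖ ≤ C * h ^ 3 ∧
      ‖(fun i => muTilde Ax Av b h (Sum.elim x (φ (h / 2) v)) (Sum.inr i)) -
          (v + h • ((Ax *ᵥ (x - b) + Av *ᵥ v + N x v) -
            (1 / 2 : ℝ) • N x v))‖ ≤ C * h ^ 2 := by
  have hl : 𝓝[>] (0 : ℝ) ≤ 𝓝 0 := nhdsWithin_le_nhds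
  have hhalf : Tendsto (fun h : ℝ => h / 2) (𝓝[>] 0) (𝓝[≥] 0) :=
    tendsto_nhdsWithin_iff.2 ⟨by simpa using (tendsto_id.mono_left hl).div_const 2,
      eventually_nhdsWithin_of_forall fun h (hh : 0 < h) => by simp only [mem_Ici]; positivity⟩
  have hNx : DifferentiableAt ℝ (N x) (φ 0 v) :=
    (hN.differentiable two_ne_zero).differentiableAt.comp (φ 0 v)
      ((differentiableAt_const x).prodMk differentiableAt_id)
  have hw : (fun h => φ (h / 2) v - v) =O[𝓝[>] 0] fun h => h := by
    have hfirst := ((hφ v 0 ⟨le_rfl, hT⟩).isBigO_sub_nhdsGE hT).comp_tendsto hhalf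
    simp only [Function.comp_def, hφ0] at hfirst
    exact hfirst.trans ((isBigO_const_mul_self 2⁻¹ _ _).congr_left fun h => by ring)
  have hw₂ : (fun h => φ (h / 2) v - v - (h / 2) • N x v) =O[𝓝[>] 0] fun h => h ^ 2 := by
    have hsecond :=
      (isBigO_sub_sub_smul_of_hasDerivWithinAt_comp hT hNx (hφ v)).comp_tendsto hhalf
    simp only [Function.comp_def, hφ0] at hsecond
    exact hsecond.trans ((isBigO_const_mul_self 4⁻¹ _ _).congr_left fun h => by ring)
  obtain ⟨C₁, hC₁, h₁, hh₁, hpos⟩ :=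
    (muTilde_inl_isBigO Ax Av b x v (N x v) hl hw hw₂).exists_pos_forall_Ioo
  obtain ⟨C₂, -, h₂, hh₂, hvel⟩ :=
    (muTilde_inr_isBigO Ax Av b x v (N x v) hl hw hw₂).exists_pos_forall_Ioo
  refine ⟨max C₁ C₂, lt_max_of_lt_left hC₁, min (min h₁ h₂) (2 * T),
    lt_min (lt_min hh₁ hh₂) (by linarith), min_le_right _ _, fun h h0 hh => ?_⟩
  have hh₀ := hh.trans_le (min_le_left _ _)
  have hnorm (k : ℕ) : ‖h ^ k‖ = h ^ k := by rw [norm_pow, Real.norm_of_nonneg h0.le]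
  constructor
  · calc _ ≤ C₁ * ‖h ^ 3‖ := hpos h ⟨h0, hh₀.trans_le (min_le_left _ _)⟩
      _ ≤ max C₁ C₂ * h ^ 3 := by rw [hnorm]; gcongr; exact le_max_left _ _
  · calc _ ≤ C₂ * ‖h ^ 2‖ := hvel h ⟨h0, hh₀.trans_le (min_le_right _ _)⟩
      _ ≤ max C₁ C₂ * h ^ 2 := by rw [hnorm]; gcongr; exact le_max_right _ _

theorem stmt12 {d : ℕ} (hd : 1 ≤ d) (Ax Av : Matrix (Fin d) (Fin d) ℝ)
    (N : (Fin d → ℝ) → (Fin d → ℝ) → (Fin d → ℝ))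
    (hN : ContDiff ℝ 2 (fun p : (Fin d → ℝ) × (Fin d → ℝ) => N p.1 p.2))
    (x v b : Fin d → ℝ) (T : ℝ) (hT : 0 < T)
    (φ : ℝ → (Fin d → ℝ) → (Fin d → ℝ))
    (hφ0 : ∀ w, φ 0 w = w)
    (hφ : ∀ w, ∀ t ∈ Set.Ico (0:ℝ) T,
      HasDerivWithinAt (fun s => φ s w) (N x (φ t w)) (Set.Ico 0 T) t) :
    ∃ C > (0:ℝ), ∃ h₀ > (0:ℝ), h₀ ≤ 2 * T ∧ ∀ h : ℝ, 0 < h → h < h₀ →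
      ‖(fun i => muTilde Ax Av b h (Sum.elim x (φ (h / 2) v)) (Sum.inl i)) -
          (x + h • v +
            (h ^ 2 / 2) • (Ax *ᵥ (x - b) + Av *ᵥ v + N x v))‖ ≤ C * h ^ 3 ∧
      ‖(fun i => muTilde Ax Av b h (Sum.elim x (φ (h / 2) v)) (Sum.inr i)) -
          (v + h • ((Ax *ᵥ (x - b) + Av *ᵥ v + N x v) -
            (1 / 2 : ℝ) • N x v))‖ ≤ C * h ^ 2 :=
  stmt12_general Ax Av N hN x v b T hT φ hφ0 hφ
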